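/- arXiv:math/0306301 — 2 statements merged into one kernel-verified Lean document; each statement's English description precedes it below -/
import Mathlib

section
/- Let Φ be a Leonard system with eigenvalue sequence θ_0, …, θ_d, and let c_1, …, c_d be the subdiagonal entries of the matrix representing A with respect to a Φ-standard basis. Then (θ_0 − θ_1)(θ_0 − θ_2)⋯(θ_0 − θ_d) = ν c_1 c_2 ⋯ c_d, where ν = tr(E_0 E*_0)^{-1}. -/
open Matrix Polynomial

def IsTridiag {K : Type*} [Field K] {n : ℕ} (M : Matrix (Fin n) (Fin n) K) : Prop :=
  ∀ i j : Fin n, ((i : ℕ) + 1 < j ∨ (j : ℕ) + 1 < i) → M i j = 0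

def IsIrredTridiag {K : Type*} [Field K] {n : ℕ} (M : Matrix (Fin n) (Fin n) K) : Prop :=
  IsTridiag M ∧ ∀ i j : Fin n, ((i : ℕ) + 1 = j ∨ (j : ℕ) + 1 = i) → M i j ≠ 0

/-- Entry of a matrix with natural-number indices; `0` when out of range. -/
def mentry {K : Type*} [Field K] {n : ℕ} (M : Matrix (Fin n) (Fin n) K) (i j : ℕ) : K :=
  if h : i < n ∧ j < n then M ⟨i, h.1⟩ ⟨j, h.2⟩ else 0

/-- A family indexed by `Fin (d+1)` viewed as indexed by `ℕ`, with value `0` out of range. -/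
def natIdx {d : ℕ} {M : Type*} [Zero M] (E : Fin (d+1) → M) (n : ℕ) : M :=
  if h : n < d + 1 then E ⟨n, h⟩ else 0

/-- A Leonard system of diameter `d` in the matrix algebra `Mat_{d+1}(K)`:
`A`, `As` are multiplicity-free with eigenvalues `θ i`, `θs i` and primitive
idempotents `E i`, `Es i`, satisfying the tridiagonal conditions. -/
structure LeonardSystem (K : Type*) [Field K] (d : ℕ) where
  A : Matrix (Fin (d+1)) (Fin (d+1)) K
  As : Matrix (Fin (d+1)) (Fin (d+1)) K
  E : Fin (d+1) → Matrix (Fin (d+1)) (Fin (d+1)) K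
  Es : Fin (d+1) → Matrix (Fin (d+1)) (Fin (d+1)) K
  θ : Fin (d+1) → K
  θs : Fin (d+1) → K
  θ_inj : Function.Injective θ
  θs_inj : Function.Injective θs
  E_ne : ∀ i, E i ≠ 0
  Es_ne : ∀ i, Es i ≠ 0
  E_mul : ∀ i j, E i * E j = if i = j then E i else 0
  Es_mul : ∀ i j, Es i * Es j = if i = j then Es i else 0
  E_sum : ∑ i, E i = 1
  Es_sum : ∑ i, Es i = 1
  A_eq : A = ∑ i, θ i • E i
  As_eq : As = ∑ i, θs i • Es i
  EAsE_zero : ∀ i j : Fin (d+1), ((i:ℕ) + 1 < j ∨ (j:ℕ) + 1 < i) → E i * As * E j = 0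
  EAsE_ne : ∀ i j : Fin (d+1), ((i:ℕ) + 1 = j ∨ (j:ℕ) + 1 = i) → E i * As * E j ≠ 0
  EsAEs_zero : ∀ i j : Fin (d+1), ((i:ℕ) + 1 < j ∨ (j:ℕ) + 1 < i) → Es i * A * Es j = 0
  EsAEs_ne : ∀ i j : Fin (d+1), ((i:ℕ) + 1 = j ∨ (j:ℕ) + 1 = i) → Es i * A * Es j ≠ 0

/-- A Leonard pair in `Mat_{d+1}(K)`. -/
structure LeonardPair (K : Type*) [Field K] (d : ℕ) where
  A : Matrix (Fin (d+1)) (Fin (d+1)) K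
  As : Matrix (Fin (d+1)) (Fin (d+1)) K
  cond1 : ∃ P : Matrix (Fin (d+1)) (Fin (d+1)) K, IsUnit P ∧
    IsIrredTridiag (P⁻¹ * A * P) ∧ (P⁻¹ * As * P).IsDiag
  cond2 : ∃ P : Matrix (Fin (d+1)) (Fin (d+1)) K, IsUnit P ∧
    (P⁻¹ * A * P).IsDiag ∧ IsIrredTridiag (P⁻¹ * As * P)

/- Let `τ = ∏_{i=1}^d (x - θ_i)`. Since `A = ∑ θ_j E_j`, we get `τ(A) = τ(θ_0) E_0`, and
since `E_0` has rank one, `E_0 E*_0 u = tr(E_0 E*_0) u`; hence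
`τ(A) E*_0 u = τ(θ_0) tr(E_0 E*_0) u`.
On the other hand `A` acts on the standard basis `E*_i u` by the matrix `B`, which is lower
Hessenberg, so the `E*_d u`-coordinate of `τ(A) E*_0 u` is `c_1 ⋯ c_d`. Thus
`c_1 ⋯ c_d = τ(θ_0) tr(E_0 E*_0)`, and the left side is nonzero because
`E*_i A E*_{i-1} ≠ 0`. -/

section OrthogonalIdempotents

variable {K R ι : Type*} [CommSemiring K] [Semiring R] [Algebra K R] [Fintype ι] [DecidableEq ι]
  {E : ι → R} {θ : ι → K}

theorem pow_eq_sum_pow_smul_of_eq_sum_smul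
    (hmul : ∀ i j, E i * E j = if i = j then E i else 0) (hsum : ∑ i, E i = 1)
    {A : R} (hA : A = ∑ i, θ i • E i) (k : ℕ) :
    A ^ k = ∑ i, θ i ^ k • E i := by
  induction k with
  | zero => simp [hsum]
  | succ k ih =>
    rw [pow_succ, ih, hA, Finset.sum_mul_sum]
    refine Finset.sum_congr rfl fun i _ => ?_
    simp [hmul, pow_succ, smul_smul, mul_comm]

theorem aeval_eq_sum_eval_smul_of_eq_sum_smul
    (hmul : ∀ i j, E i * E j = if i = j then E i else 0) (hsum : ∑ i, E i = 1)
    {A : R} (hA : A = ∑ i, θ i • E i) (p : K[X]) :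
    aeval A p = ∑ i, p.eval (θ i) • E i := by
  induction p using Polynomial.induction_on' with
  | add p q hp hq => simp [hp, hq, add_smul, Finset.sum_add_distrib]
  | monomial n a =>
    rw [aeval_monomial, ← Algebra.smul_def, pow_eq_sum_pow_smul_of_eq_sum_smul hmul hsum hA,
      Finset.smul_sum]
    simp [smul_smul]

end OrthogonalIdempotents

theorem aeval_mul_eq_mul_aeval {K R : Type*} [CommSemiring K] [Semiring R] [Algebra K R]
    {A B V : R} (h : A * V = V * B) (p : K[X]) : aeval A p * V = V * aeval B p := by
  induction p using Polynomial.induction_on' with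
  | add p q hp hq => simp [add_mul, mul_add, hp, hq]
  | monomial n a =>
    have hpow : V * B ^ n = A ^ n * V := SemiconjBy.pow_right (h.symm : SemiconjBy V B A) n
    rw [aeval_monomial, aeval_monomial, mul_assoc, ← hpow, ← mul_assoc, Algebra.commutes,
      mul_assoc]

theorem mentry_of_lt {K : Type*} [Field K] {n : ℕ} (M : Matrix (Fin n) (Fin n) K) {i j : ℕ}
    (hi : i < n) (hj : j < n) : mentry M i j = M ⟨i, hi⟩ ⟨j, hj⟩ := by
  simp [mentry, hi, hj]

theorem natIdx_val {d : ℕ} {M : Type*} [Zero M] (E : Fin (d+1) → M) (j : Fin (d+1)) :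
    natIdx E j = E j :=
  dif_pos j.isLt

section MatrixRankOne

variable {K n : Type*} [Field K] [Fintype n] [DecidableEq n]

theorem Matrix.exists_mulVec_ne_zero {M : Matrix n n K} (hM : M ≠ 0) : ∃ y, M *ᵥ y ≠ 0 := by
  by_contra! h
  exact hM (ext_of_mulVec_single fun i => by rw [h, zero_mulVec])

/-- Nonzero vectors taken from the ranges of the `E i` are linearly independent, so by counting
they form a basis and every range is a line. -/
theorem exists_mulVec_eq_smul_of_orthogonal_idempotents {E : n → Matrix n n K}
    (hne : ∀ i, E i ≠ 0) (hmul : ∀ i j, E i * E j = if i = j then E i else 0)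
    {j : n} {w : n → K} (hw : E j *ᵥ w = w) (hw0 : w ≠ 0) (y : n → K) :
    ∃ c : K, E j *ᵥ y = c • w := by
  choose z hz using fun i => Matrix.exists_mulVec_ne_zero (hne i)
  let x : n → n → K := fun i => E i *ᵥ if i = j then w else z i
  have hx0 : ∀ i, x i ≠ 0 := fun i => by
    by_cases h : i = j
    · simpa [x, h, hw] using hw0
    · simpa [x, h] using hz i
  have hEx : ∀ m i, E m *ᵥ x i = if m = i then x i else 0 := fun m i => by
    rw [mulVec_mulVec, hmul]
    by_cases h : m = i <;> simp [h, x]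
  have hli : LinearIndependent K x := by
    refine Fintype.linearIndependent_iff.mpr fun g hg m => ?_
    have hm := congrArg (E m *ᵥ ·) hg
    simp only [mulVec_sum, mulVec_smul, hEx, smul_ite, smul_zero, Finset.sum_ite_eq,
      Finset.mem_univ, if_true, mulVec_zero] at hm
    exact (smul_eq_zero.mp hm).resolve_right (hx0 m)
  obtain ⟨c, hc⟩ := Submodule.mem_span_range_iff_exists_fun K |>.mp
    ((hli.span_eq_top_of_card_eq_finrank' (by simp)).symm ▸ Submodule.mem_top (x := y))
  refine ⟨c j, ?_⟩
  rw [← hc, mulVec_sum]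
  simp only [mulVec_smul, hEx, smul_ite, smul_zero, Finset.sum_ite_eq, Finset.mem_univ, if_true]
  simp [x, hw]

theorem mulVec_eq_trace_smul_of_forall_exists {M : Matrix n n K} {w : n → K}
    (h : ∀ y, ∃ c : K, M *ᵥ y = c • w) : M *ᵥ w = M.trace • w := by
  choose γ hγ using fun i => h (Pi.single i 1)
  have hM : ∀ k i, M k i = γ i * w k := fun k i => by
    simpa using congrFun (hγ i) k
  ext k
  simp only [mulVec, dotProduct, trace, diag, hM, Pi.smul_apply, smul_eq_mul,
    Finset.sum_mul]
  exact Finset.sum_congr rfl fun i _ => by ring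

end MatrixRankOne

theorem aeval_prod_X_sub_C_mulVec_single_zero_apply {K : Type*} [Field K] {n : ℕ}
    {B : Matrix (Fin (n+1)) (Fin (n+1)) K}
    (hB : ∀ i j : Fin (n+1), (j : ℕ) + 1 < i → B i j = 0)
    (c : ℕ → K) (k : ℕ) (j : Fin (n+1)) (hkj : k ≤ j) :
    (aeval B (∏ i ∈ Finset.Icc 1 k, (X - C (c i))) *ᵥ Pi.single 0 1) j =
      if (j : ℕ) = k then ∏ i ∈ Finset.Icc 1 k, mentry B i (i - 1) else 0 := by
  induction k generalizing j with
  | zero =>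
    rw [Finset.Icc_eq_empty (by omega)]
    simp only [Finset.prod_empty, map_one, one_mulVec, Pi.single_apply, Fin.val_eq_zero_iff]
  | succ k ih =>
    set x := aeval B (∏ i ∈ Finset.Icc 1 k, (X - C (c i))) *ᵥ Pi.single 0 1
    have hk : k < n + 1 := by omega
    have hx : ∀ m : Fin (n+1), k < m → x m = 0 := fun m hm => by
      simpa [hm.ne'] using ih m hm.le
    have hBx : (B *ᵥ x) j = B j ⟨k, hk⟩ * x ⟨k, hk⟩ := by
      simp only [mulVec, dotProduct]
      refine Finset.sum_eq_single _ (fun m _ hm => ?_) (by simp)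
      rcases lt_or_gt_of_ne (fun h : (m : ℕ) = k => hm (Fin.ext h)) with hlt | hgt
      · rw [hB j m (by omega), zero_mul]
      · rw [hx m hgt, mul_zero]
    rw [Finset.prod_Icc_succ_top (by omega), mul_comm, map_mul, ← mulVec_mulVec]
    simp only [map_sub, aeval_X, aeval_C, sub_mulVec, Pi.sub_apply,
      Algebra.algebraMap_eq_smul_one, smul_mulVec, one_mulVec]
    rw [hBx]
    change B j ⟨k, hk⟩ * x ⟨k, hk⟩ - c (k + 1) • x j = _
    rw [hx j (by omega), smul_zero, sub_zero,
      ih ⟨k, hk⟩ le_rfl, if_pos rfl, Finset.prod_Icc_succ_top (by omega), mul_comm]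
    split_ifs with hj
    · rw [Nat.add_sub_cancel, mentry_of_lt B (hj ▸ j.isLt) hk]
      congr
      exact Fin.ext hj
    · rw [hB j ⟨k, hk⟩ (by simp; omega), mul_zero]

theorem Fin.iff_zero_of_forall_castSucc_iff_succ {n : ℕ} {P : Fin (n+1) → Prop}
    (h : ∀ k : Fin n, P k.castSucc ↔ P k.succ) (i : Fin (n+1)) : P i ↔ P 0 := by
  induction i using Fin.induction with
  | zero => rfl
  | succ k ih => exact (h k).symm.trans ih

namespace LeonardSystem

variable {K : Type*} [Field K] {d : ℕ} (L : LeonardSystem K d)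

/-- Its columns form a `Φ`-standard basis when `u ∈ E_0 V`. -/
def standardMatrix (u : Fin (d+1) → K) : Matrix (Fin (d+1)) (Fin (d+1)) K :=
  Matrix.of fun k i => (L.Es i *ᵥ u) k

def IsActionMatrix (u : Fin (d+1) → K) (B : Matrix (Fin (d+1)) (Fin (d+1)) K) : Prop :=
  ∀ j, L.A *ᵥ (L.Es j *ᵥ u) = ∑ i, B i j • (L.Es i *ᵥ u)

theorem Es_mulVec_Es_mulVec (i j : Fin (d+1)) (x : Fin (d+1) → K) :
    L.Es i *ᵥ (L.Es j *ᵥ x) = if i = j then L.Es j *ᵥ x else 0 := by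
  rw [mulVec_mulVec, L.Es_mul]
  by_cases h : i = j <;> simp [h]

theorem standardMatrix_mulVec (u x : Fin (d+1) → K) :
    L.standardMatrix u *ᵥ x = ∑ i, x i • (L.Es i *ᵥ u) := by
  ext k
  simp [standardMatrix, mulVec, dotProduct, mul_comm]

theorem Es_mulVec_standardMatrix_mulVec (u x : Fin (d+1) → K) (j : Fin (d+1)) :
    L.Es j *ᵥ (L.standardMatrix u *ᵥ x) = x j • (L.Es j *ᵥ u) := by
  rw [standardMatrix_mulVec, mulVec_sum]
  simp only [mulVec_smul, Es_mulVec_Es_mulVec, smul_ite, smul_zero]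
  simp

variable {L} {u : Fin (d+1) → K} {B : Matrix (Fin (d+1)) (Fin (d+1)) K}

theorem A_mul_standardMatrix (hB : L.IsActionMatrix u B) :
    L.A * L.standardMatrix u = L.standardMatrix u * B := by
  ext k j
  change (L.A *ᵥ (L.Es j *ᵥ u)) k = _
  simp [hB j, mul_apply, standardMatrix, mul_comm]

theorem Es_mulVec_A_mulVec_Es_mulVec (hB : L.IsActionMatrix u B) (i j : Fin (d+1)) :
    L.Es i *ᵥ (L.A *ᵥ (L.Es j *ᵥ u)) = B i j • (L.Es i *ᵥ u) := by
  rw [hB j, mulVec_sum]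
  simp only [mulVec_smul, Es_mulVec_Es_mulVec, smul_ite, smul_zero]
  simp

theorem smul_Es_mulVec_ne_zero (hB : L.IsActionMatrix u B) {i j : Fin (d+1)}
    (hj : L.Es j *ᵥ u ≠ 0) (h : L.Es i * L.A * L.Es j ≠ 0) :
    B i j • (L.Es i *ᵥ u) ≠ 0 := by
  obtain ⟨y, hy⟩ := Matrix.exists_mulVec_ne_zero h
  obtain ⟨c, hc⟩ := exists_mulVec_eq_smul_of_orthogonal_idempotents L.Es_ne L.Es_mul
    (by rw [Es_mulVec_Es_mulVec, if_pos rfl]) hj y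
  rw [← mulVec_mulVec, ← mulVec_mulVec, hc, mulVec_smul, mulVec_smul,
    Es_mulVec_A_mulVec_Es_mulVec hB] at hy
  exact right_ne_zero_of_smul hy

theorem Es_mulVec_ne_zero (hu0 : u ≠ 0) (hB : L.IsActionMatrix u B) (i : Fin (d+1)) :
    L.Es i *ᵥ u ≠ 0 := by
  have hadj : ∀ k : Fin d, L.Es k.castSucc *ᵥ u ≠ 0 ↔ L.Es k.succ *ᵥ u ≠ 0 := fun k =>
    ⟨fun h => right_ne_zero_of_smul <|
        smul_Es_mulVec_ne_zero hB h (L.EsAEs_ne _ _ (Or.inr (by simp))),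
      fun h => right_ne_zero_of_smul <|
        smul_Es_mulVec_ne_zero hB h (L.EsAEs_ne _ _ (Or.inl (by simp)))⟩
  obtain ⟨m, hm⟩ : ∃ m, L.Es m *ᵥ u ≠ 0 := by
    by_contra! h
    apply hu0
    rw [← one_mulVec u, ← L.Es_sum, sum_mulVec]
    simp [h]
  have hall := Fin.iff_zero_of_forall_castSucc_iff_succ (P := fun i => L.Es i *ᵥ u ≠ 0) hadj
  exact (hall i).mpr ((hall m).mp hm)

theorem prod_subdiag_ne_zero (hu0 : u ≠ 0) (hB : L.IsActionMatrix u B) :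
    ∏ i ∈ Finset.Icc 1 d, mentry B i (i - 1) ≠ 0 := by
  refine Finset.prod_ne_zero_iff.mpr fun i hi => ?_
  obtain ⟨h1, hd⟩ := Finset.mem_Icc.mp hi
  rw [mentry_of_lt B (by omega) (by omega)]
  refine left_ne_zero_of_smul (smul_Es_mulVec_ne_zero hB (Es_mulVec_ne_zero hu0 hB _) ?_)
  exact L.EsAEs_ne _ _ (Or.inr (by simp; omega))

theorem entry_eq_zero_of_succ_lt (hu0 : u ≠ 0) (hB : L.IsActionMatrix u B) (i j : Fin (d+1))
    (hij : (j : ℕ) + 1 < i) : B i j = 0 := by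
  have h := Es_mulVec_A_mulVec_Es_mulVec hB i j
  rw [mulVec_mulVec, mulVec_mulVec, L.EsAEs_zero i j (Or.inr hij), zero_mulVec] at h
  exact (smul_eq_zero.mp h.symm).resolve_right (Es_mulVec_ne_zero hu0 hB i)

theorem E_zero_mulVec_Es_zero_mulVec (hu : L.E 0 *ᵥ u = u) (hu0 : u ≠ 0) :
    L.E 0 *ᵥ (L.Es 0 *ᵥ u) = (L.E 0 * L.Es 0).trace • u := by
  rw [mulVec_mulVec]
  refine mulVec_eq_trace_smul_of_forall_exists fun y => ?_
  rw [← mulVec_mulVec]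
  exact exists_mulVec_eq_smul_of_orthogonal_idempotents L.E_ne L.E_mul hu hu0 _

theorem aeval_A_prod_X_sub_C :
    aeval L.A (∏ i ∈ Finset.Icc 1 d, (X - C (natIdx L.θ i))) =
      (∏ i ∈ Finset.Icc 1 d, (L.θ 0 - natIdx L.θ i)) • L.E 0 := by
  rw [aeval_eq_sum_eval_smul_of_eq_sum_smul L.E_mul L.E_sum L.A_eq,
    Fintype.sum_eq_single 0 fun j hj => ?_]
  · simp [eval_prod]
  have hj : (j : ℕ) ∈ Finset.Icc 1 d := Finset.mem_Icc.mpr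
    ⟨Nat.one_le_iff_ne_zero.mpr (Fin.val_ne_zero_iff.mpr hj), Nat.lt_succ_iff.mp j.isLt⟩
  simp [eval_prod, Finset.prod_eq_zero hj, natIdx_val]

theorem prod_subdiag_eq (hu : L.E 0 *ᵥ u = u) (hu0 : u ≠ 0)
    (hB : L.IsActionMatrix u B) :
    ∏ i ∈ Finset.Icc 1 d, mentry B i (i - 1) =
      (∏ i ∈ Finset.Icc 1 d, (L.θ 0 - natIdx L.θ i)) * (L.E 0 * L.Es 0).trace := by
  set τ : K[X] := ∏ i ∈ Finset.Icc 1 d, (X - C (natIdx L.θ i))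
  have hτB := aeval_prod_X_sub_C_mulVec_single_zero_apply (entry_eq_zero_of_succ_lt hu0 hB)
    (natIdx L.θ) d (Fin.last d) le_rfl
  have hcol : L.standardMatrix u *ᵥ Pi.single 0 1 = L.Es 0 *ᵥ u := by
    rw [mulVec_single_one]
    rfl
  refine smul_left_injective K (Es_mulVec_ne_zero hu0 hB (Fin.last d)) ?_
  calc _ = L.Es (Fin.last d) *ᵥ (L.standardMatrix u *ᵥ (aeval B τ *ᵥ Pi.single 0 1)) := by
        rw [Es_mulVec_standardMatrix_mulVec, hτB, Fin.val_last, if_pos rfl]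
    _ = L.Es (Fin.last d) *ᵥ (aeval L.A τ *ᵥ (L.standardMatrix u *ᵥ Pi.single 0 1)) := by
        rw [mulVec_mulVec (M := aeval L.A τ), aeval_mul_eq_mul_aeval (A_mul_standardMatrix hB),
          ← mulVec_mulVec]
    _ = _ := by
        rw [hcol, aeval_A_prod_X_sub_C, smul_mulVec, E_zero_mulVec_Es_zero_mulVec hu hu0,
          smul_smul, mulVec_smul]

end LeonardSystem

theorem stmt15 {K : Type*} [Field K] {d : ℕ} (L : LeonardSystem K d)
    (u : Fin (d+1) → K) (hu : L.E 0 *ᵥ u = u) (hu0 : u ≠ 0)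
    (B : Matrix (Fin (d+1)) (Fin (d+1)) K)
    (hB : ∀ j : Fin (d+1), L.A *ᵥ (L.Es j *ᵥ u) = ∑ i, B i j • (L.Es i *ᵥ u))
    (ν : K) (hν : ν = (Matrix.trace (L.E 0 * L.Es 0))⁻¹) :
    ∏ i ∈ Finset.Icc 1 d, (L.θ 0 - natIdx L.θ i) =
      ν * ∏ i ∈ Finset.Icc 1 d, mentry B i (i-1) := by
  have key := L.prod_subdiag_eq hu hu0 hB
  have htrace : (L.E 0 * L.Es 0).trace ≠ 0 :=
    right_ne_zero_of_mul (key ▸ L.prod_subdiag_ne_zero hu0 hB)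
  rw [hν, key, mul_comm, mul_assoc, mul_inv_cancel₀ htrace, mul_one]
end

section
/- Let Φ be a Leonard system with eigenvalue sequences θ_i, θ*_i and normalized polynomials u_i = p_i / p_i(θ_0) (for Φ) and u*_j = p*_j / p*_j(θ*_0) (for the dual system Φ*). Then Askey–Wilson duality holds: u_i(θ_j) = u*_j(θ*_i) for all 0 ≤ i, j ≤ d. -/
open Matrix Polynomial

/-!
Write `E*ₖ` for `L.Es k`, `P = pᵢ(A)` and `Q = p*ⱼ(A*)`. The idempotents `E*ₖ` have rank one, so
`E*ₖ M E*ₖ = tr(E*ₖ M) E*ₖ`; with this, the three-term recurrence and the tridiagonal action of `A`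
on the `E*ₖ` give `pₙ₊₁(A) E*₀ = E*ₙ₊₁ A pₙ(A) E*₀` by induction, so that `P E*₀ = E*ᵢ P E*₀ ≠ 0`.
The same for the transposed dual system gives `E₀ Q Eⱼ = E₀ Q`. Evaluating `E₀ Q P E*₀` through
either identity, with `Q E*ᵢ = p*ⱼ(θ*ᵢ) E*ᵢ` and `Eⱼ P = pᵢ(θⱼ) Eⱼ`, yields
`p*ⱼ(θ*ᵢ) pᵢ(θ₀) E₀E*₀ = pᵢ(θⱼ) p*ⱼ(θ*₀) E₀E*₀`. Finally no `Eⱼ E*₀` vanishes, since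
`0 = Eⱼ A E*ₖ = Eⱼ E*ₖ₊₁ A E*ₖ` would propagate `Eⱼ E*ₖ = 0` to all `k`; this gives `E₀E*₀ ≠ 0`
and `pᵢ(θ₀) ≠ 0`.
-/

namespace Matrix

variable {K : Type*} [Field K] {n : Type*} [Fintype n]

theorem exists_eq_vecMulVec_of_orthogonal_idempotents [DecidableEq n] {ι : Type*} [Fintype ι]
    [DecidableEq ι] (hcard : Fintype.card ι = Fintype.card n) (F : ι → Matrix n n K)
    (hmul : ∀ i j, F i * F j = if i = j then F i else 0) (hne : ∀ i, F i ≠ 0) (i : ι) :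
    ∃ u v : n → K, F i = vecMulVec u v := by
  have hcol : ∀ j, ∃ c, F j *ᵥ Pi.single c 1 ≠ 0 := by
    intro j
    by_contra! h
    exact hne j (Matrix.ext fun x c => by simpa [mulVec_single_one] using congrFun (h c) x)
  choose c hc using hcol
  -- nonzero columns `u j` of the `F j`; as `F i u j = δᵢⱼ u j` they form a basis in which each
  -- `F i` is a coordinate projection
  set u : ι → n → K := fun j => F j *ᵥ Pi.single (c j) 1
  have hFu : ∀ i j, F i *ᵥ u j = if i = j then u j else 0 := by
    intro i j
    simp only [u, mulVec_mulVec, hmul]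
    split_ifs with h
    · rw [h]
    · exact zero_mulVec _
  have hli : LinearIndependent K u := by
    rw [Fintype.linearIndependent_iff]
    intro g hg i
    have := congrArg (F i *ᵥ ·) hg
    simp only [mulVec_sum, mulVec_smul, hFu, smul_ite, smul_zero, Finset.sum_ite_eq,
      Finset.mem_univ, if_true, mulVec_zero] at this
    exact (smul_eq_zero.mp this).resolve_right (hc i)
  have : Nonempty ι := ⟨i⟩
  let b := basisOfLinearIndependentOfCardEqFinrank hli (by simp [hcard])
  have hb : ⇑b = u := coe_basisOfLinearIndependentOfCardEqFinrank hli _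
  have hFw : ∀ w, F i *ᵥ w = b.repr w i • u i := by
    intro w
    conv_lhs => rw [← b.sum_repr w]
    simp only [hb, mulVec_sum, mulVec_smul, hFu, smul_ite, smul_zero, Finset.sum_ite_eq,
      Finset.mem_univ, if_true]
  refine ⟨u i, fun y => b.repr (Pi.single y 1) i, Matrix.ext fun x y => ?_⟩
  simpa [mulVec_single_one, vecMulVec_apply, mul_comm] using congrFun (hFw (Pi.single y 1)) x

theorem vecMulVec_mul_mul_vecMulVec_self (u v : n → K) (M : Matrix n n K) :
    vecMulVec u v * M * vecMulVec u v = trace (vecMulVec u v * M) • vecMulVec u v := by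
  rw [vecMulVec_mul, vecMulVec_mul_vecMulVec, vecMulVec_smul, trace_vecMulVec, dotProduct_comm]

theorem mul_vecMulVec_mul_ne_zero {u v : n → K} {B C : Matrix n n K}
    (hB : B * vecMulVec u v ≠ 0) (hC : vecMulVec u v * C ≠ 0) : B * vecMulVec u v * C ≠ 0 := by
  rw [mul_vecMulVec] at hB ⊢
  rw [vecMulVec_mul] at hC ⊢
  simp_all [vecMulVec_eq_zero]

theorem transpose_aeval [DecidableEq n] (M : Matrix n n K) (f : K[X]) :
    (aeval M f)ᵀ = aeval Mᵀ f := by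
  simp only [aeval_eq_sum_range, transpose_sum, transpose_smul, transpose_pow]

theorem transpose_mul_mul (X Y Z : Matrix n n K) : (X * Y * Z)ᵀ = Zᵀ * Yᵀ * Xᵀ := by
  simp only [transpose_mul, Matrix.mul_assoc]

theorem transpose_mul_ite {ι : Type*} [DecidableEq ι] {F : ι → Matrix n n K}
    (hmul : ∀ i j, F i * F j = if i = j then F i else 0) (i j : ι) :
    (F i)ᵀ * (F j)ᵀ = if i = j then (F i)ᵀ else 0 := by
  rw [← transpose_mul, hmul]
  split_ifs with h h' h' <;> simp_all

end Matrix

theorem Polynomial.aeval_mul_eq_eval_smul {K R : Type*} [Field K] [Ring R] [Algebra K R]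
    {B e : R} {c : K} (h : B * e = c • e) (f : K[X]) : aeval B f * e = f.eval c • e := by
  have := Module.End.aeval_apply_of_mem_apply_eq_smul (f := Algebra.lmul K R B) (p := f) h
  rwa [Polynomial.aeval_algHom_apply] at this

section NatIdx

variable {d : ℕ} {M : Type*} [Zero M] (F : Fin (d+1) → M)

theorem natIdx_of_lt {k : ℕ} (h : k < d + 1) : natIdx F k = F ⟨k, h⟩ := dif_pos h

@[simp]
theorem natIdx_val_s17 (i : Fin (d+1)) : natIdx F i = F i := natIdx_of_lt F i.isLt

theorem natIdx_of_gt {k : ℕ} (h : d < k) : natIdx F k = 0 := dif_neg (by omega)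

theorem natIdx_comp {N : Type*} [Zero N] (g : M → N) (hg : g 0 = 0) (k : ℕ) :
    natIdx (fun i => g (F i)) k = g (natIdx F k) := by
  unfold natIdx
  split_ifs <;> simp [hg]

theorem sum_range_natIdx {M : Type*} [AddCommMonoid M] (F : Fin (d+1) → M) :
    ∑ k ∈ Finset.range (d+1), natIdx F k = ∑ i, F i := by
  rw [← Fin.sum_univ_eq_sum_range]
  simp

end NatIdx

namespace LeonardSystem

variable {K : Type*} [Field K] {d : ℕ}

def dual (L : LeonardSystem K d) : LeonardSystem K d where
  A := L.As
  As := L.A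
  E := L.Es
  Es := L.E
  θ := L.θs
  θs := L.θ
  θ_inj := L.θs_inj
  θs_inj := L.θ_inj
  E_ne := L.Es_ne
  Es_ne := L.E_ne
  E_mul := L.Es_mul
  Es_mul := L.E_mul
  E_sum := L.Es_sum
  Es_sum := L.E_sum
  A_eq := L.As_eq
  As_eq := L.A_eq
  EAsE_zero := L.EsAEs_zero
  EAsE_ne := L.EsAEs_ne
  EsAEs_zero := L.EAsE_zero
  EsAEs_ne := L.EAsE_ne

-- Plays the role of the antiautomorphism `†` of the paper: it turns statements about `M E*₀`
-- into statements about `E*₀ M`.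
def transpose (L : LeonardSystem K d) : LeonardSystem K d where
  A := L.Aᵀ
  As := L.Asᵀ
  E i := (L.E i)ᵀ
  Es i := (L.Es i)ᵀ
  θ := L.θ
  θs := L.θs
  θ_inj := L.θ_inj
  θs_inj := L.θs_inj
  E_ne i := by simpa using L.E_ne i
  Es_ne i := by simpa using L.Es_ne i
  E_mul := Matrix.transpose_mul_ite L.E_mul
  Es_mul := Matrix.transpose_mul_ite L.Es_mul
  E_sum := by rw [← Matrix.transpose_sum, L.E_sum, Matrix.transpose_one]
  Es_sum := by rw [← Matrix.transpose_sum, L.Es_sum, Matrix.transpose_one]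
  A_eq := by simp [L.A_eq, Matrix.transpose_sum]
  As_eq := by simp [L.As_eq, Matrix.transpose_sum]
  EAsE_zero i j h := by
    rw [← Matrix.transpose_mul_mul, L.EAsE_zero j i h.symm, Matrix.transpose_zero]
  EAsE_ne i j h := by
    rw [← Matrix.transpose_mul_mul, ne_eq, Matrix.transpose_eq_zero]
    exact L.EAsE_ne j i h.symm
  EsAEs_zero i j h := by
    rw [← Matrix.transpose_mul_mul, L.EsAEs_zero j i h.symm, Matrix.transpose_zero]
  EsAEs_ne i j h := by
    rw [← Matrix.transpose_mul_mul, ne_eq, Matrix.transpose_eq_zero]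
    exact L.EsAEs_ne j i h.symm

section

variable (L : LeonardSystem K d)

@[simp] theorem transpose_A : L.transpose.A = L.Aᵀ := rfl
@[simp] theorem transpose_E (j : Fin (d+1)) : L.transpose.E j = (L.E j)ᵀ := rfl
@[simp] theorem transpose_Es (j : Fin (d+1)) : L.transpose.Es j = (L.Es j)ᵀ := rfl
@[simp] theorem transpose_θ : L.transpose.θ = L.θ := rfl

theorem E_mul_A (j : Fin (d+1)) : L.E j * L.A = L.θ j • L.E j := by
  simp [L.A_eq, Finset.mul_sum, L.E_mul]

theorem A_mul_E (j : Fin (d+1)) : L.A * L.E j = L.θ j • L.E j := by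
  simp [L.A_eq, Finset.sum_mul, L.E_mul]

theorem aeval_mul_E (f : K[X]) (j : Fin (d+1)) :
    aeval L.A f * L.E j = f.eval (L.θ j) • L.E j :=
  Polynomial.aeval_mul_eq_eval_smul (L.A_mul_E j) f

theorem E_mul_aeval (f : K[X]) (j : Fin (d+1)) :
    L.E j * aeval L.A f = f.eval (L.θ j) • L.E j := by
  simpa [← Matrix.transpose_aeval, ← Matrix.transpose_mul, ← Matrix.transpose_smul]
    using L.transpose.aeval_mul_E f j

theorem Es_eq_vecMulVec (i : Fin (d+1)) : ∃ u v, L.Es i = vecMulVec u v :=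
  Matrix.exists_eq_vecMulVec_of_orthogonal_idempotents rfl L.Es L.Es_mul L.Es_ne i

theorem natIdx_Es_mul_self (k : ℕ) : natIdx L.Es k * natIdx L.Es k = natIdx L.Es k := by
  rcases lt_or_ge k (d+1) with hk | hk
  · simp [natIdx_of_lt _ hk, L.Es_mul]
  · simp [natIdx_of_gt _ hk]

theorem natIdx_Es_mul_of_ne {k l : ℕ} (h : k ≠ l) : natIdx L.Es k * natIdx L.Es l = 0 := by
  rcases lt_or_ge k (d+1) with hk | hk
  · rcases lt_or_ge l (d+1) with hl | hl
    · simp [natIdx_of_lt _ hk, natIdx_of_lt _ hl, L.Es_mul, h]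
    · simp [natIdx_of_gt _ hl]
  · simp [natIdx_of_gt _ hk]

theorem sum_natIdx_Es : ∑ k ∈ Finset.range (d+1), natIdx L.Es k = 1 := by
  rw [sum_range_natIdx, L.Es_sum]

theorem natIdx_Es_mul_A_mul_of_far {k l : ℕ} (h : k + 1 < l ∨ l + 1 < k) :
    natIdx L.Es k * L.A * natIdx L.Es l = 0 := by
  rcases lt_or_ge k (d+1) with hk | hk
  · rcases lt_or_ge l (d+1) with hl | hl
    · rw [natIdx_of_lt _ hk, natIdx_of_lt _ hl]
      exact L.EsAEs_zero _ _ h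
    · simp [natIdx_of_gt _ hl]
  · simp [natIdx_of_gt _ hk]

theorem natIdx_Es_succ_mul_A_mul_ne_zero {k : ℕ} (h : k < d) :
    natIdx L.Es (k+1) * L.A * natIdx L.Es k ≠ 0 := by
  rw [natIdx_of_lt _ (by omega), natIdx_of_lt _ (by omega)]
  exact L.EsAEs_ne _ _ (Or.inr rfl)

theorem natIdx_Es_mul_mul_self (k : ℕ) (M : Matrix (Fin (d+1)) (Fin (d+1)) K) :
    natIdx L.Es k * M * natIdx L.Es k = trace (natIdx L.Es k * M) • natIdx L.Es k := by
  rcases lt_or_ge k (d+1) with hk | hk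
  · obtain ⟨u, v, huv⟩ := L.Es_eq_vecMulVec ⟨k, hk⟩
    rw [natIdx_of_lt _ hk, huv, Matrix.vecMulVec_mul_mul_vecMulVec_self]
  · simp [natIdx_of_gt _ hk]

theorem mul_natIdx_Es_mul_ne_zero {k : ℕ} {B C : Matrix (Fin (d+1)) (Fin (d+1)) K}
    (hB : B * natIdx L.Es k ≠ 0) (hC : natIdx L.Es k * C ≠ 0) : B * natIdx L.Es k * C ≠ 0 := by
  rcases lt_or_ge k (d+1) with hk | hk
  · obtain ⟨u, v, huv⟩ := L.Es_eq_vecMulVec ⟨k, hk⟩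
    rw [natIdx_of_lt _ hk, huv] at hB hC ⊢
    exact Matrix.mul_vecMulVec_mul_ne_zero hB hC
  · simp [natIdx_of_gt _ hk] at hB

theorem mul_eq_mul_natIdx_Es_mul_of_forall_ne {m : ℕ} {B C : Matrix (Fin (d+1)) (Fin (d+1)) K}
    (h : ∀ k, k ≠ m → B * natIdx L.Es k * C = 0) : B * C = B * natIdx L.Es m * C := by
  calc B * C = ∑ k ∈ Finset.range (d+1), B * natIdx L.Es k * C := by
        rw [← Finset.sum_mul, ← Finset.mul_sum, L.sum_natIdx_Es, Matrix.mul_one]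
    _ = B * natIdx L.Es m * C := Finset.sum_eq_single m (fun k _ hk => h k hk)
          (fun hm => by simp [natIdx_of_gt _ (by simpa using hm)])

/-- The three-term recurrence of `p`, its coefficients given in the rank-one form
`E*ₙ A E*ₙ = aₙ E*ₙ`, `E*ₙ A E*ₙ₊₁ A E*ₙ = xₙ₊₁ E*ₙ` of their trace formulas. -/
structure IsPolySeq (a x : ℕ → K) (p : ℕ → K[X]) : Prop where
  p_zero : p 0 = 1
  X_mul : ∀ n ≤ d, X * p n = p (n+1) + C (a n) * p n + C (x n) * p (n-1)
  x_zero : x 0 = 0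
  Es_A_Es : ∀ n, natIdx L.Es n * L.A * natIdx L.Es n = a n • natIdx L.Es n
  Es_A_Es_A_Es : ∀ n < d,
    natIdx L.Es n * L.A * natIdx L.Es (n+1) * L.A * natIdx L.Es n = x (n+1) • natIdx L.Es n

theorem isPolySeq_of_trace (a x : ℕ → K) (ha : ∀ i : Fin (d+1), a i = trace (L.Es i * L.A))
    (hx0 : x 0 = 0)
    (hx : ∀ i : Fin (d+1), 1 ≤ (i:ℕ) → x i = trace (L.Es i * L.A * natIdx L.Es (i - 1) * L.A))
    (p : ℕ → K[X]) (hp0 : p 0 = 1)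
    (hrec : ∀ n ≤ d, X * p n = p (n+1) + C (a n) * p n + C (x n) * p (n-1)) :
    L.IsPolySeq a x p where
  p_zero := hp0
  X_mul := hrec
  x_zero := hx0
  Es_A_Es n := by
    rw [L.natIdx_Es_mul_mul_self]
    rcases lt_or_ge n (d+1) with hn | hn
    · rw [natIdx_of_lt _ hn, ha ⟨n, hn⟩]
    · simp [natIdx_of_gt _ hn]
  Es_A_Es_A_Es n hn := by
    have h := L.natIdx_Es_mul_mul_self n (L.A * natIdx L.Es (n+1) * L.A)
    have htr : trace (natIdx L.Es n * L.A * (natIdx L.Es (n+1) * L.A)) = x (n+1) := by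
      rw [Matrix.trace_mul_comm, hx ⟨n+1, by omega⟩ (by simp),
        natIdx_of_lt L.Es (show n + 1 < d + 1 by omega)]
      simp only [Matrix.mul_assoc, add_tsub_cancel_right]
    simp only [Matrix.mul_assoc] at h htr ⊢
    rwa [htr] at h

theorem E_mul_Es_zero_ne_zero (j : Fin (d+1)) : L.E j * L.Es 0 ≠ 0 := by
  intro h0
  have hvanish : ∀ k, L.E j * natIdx L.Es k = 0 := by
    intro k
    induction k using Nat.strong_induction_on with
    | _ k ih =>
    rcases k with _ | k
    · simpa [natIdx_of_lt L.Es (Nat.succ_pos d)] using h0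
    rcases lt_or_ge k d with hk | hk
    · by_contra hne
      have hexpand : L.E j * (L.A * natIdx L.Es k) =
          L.E j * natIdx L.Es (k+1) * (L.A * natIdx L.Es k) := by
        refine L.mul_eq_mul_natIdx_Es_mul_of_forall_ne fun l hl => ?_
        rcases (show l ≤ k ∨ k + 1 < l by omega) with hlk | hlk
        · rw [ih l (by omega), Matrix.zero_mul]
        · rw [Matrix.mul_assoc, ← Matrix.mul_assoc (natIdx L.Es l),
            L.natIdx_Es_mul_A_mul_of_far (Or.inr hlk), Matrix.mul_zero]
      have hzero : L.E j * (L.A * natIdx L.Es k) = 0 := by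
        rw [← Matrix.mul_assoc, E_mul_A, smul_mul_assoc, ih k k.lt_succ_self, smul_zero]
      refine L.mul_natIdx_Es_mul_ne_zero hne ?_ (hexpand.symm.trans hzero)
      rw [← Matrix.mul_assoc]
      exact L.natIdx_Es_succ_mul_A_mul_ne_zero hk
    · simp [natIdx_of_gt L.Es (show d < k + 1 by omega)]
  apply L.E_ne j
  calc L.E j = ∑ k ∈ Finset.range (d+1), L.E j * natIdx L.Es k := by
        rw [← Finset.mul_sum, L.sum_natIdx_Es, Matrix.mul_one]
    _ = 0 := Finset.sum_eq_zero fun k _ => hvanish k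

theorem E_zero_mul_Es_ne_zero (i : Fin (d+1)) : L.E 0 * L.Es i ≠ 0 := by
  have h := L.dual.transpose.E_mul_Es_zero_ne_zero i
  rwa [transpose_E, transpose_Es, ← Matrix.transpose_mul, ne_eq, Matrix.transpose_eq_zero] at h

end

variable {L : LeonardSystem K d} {a x : ℕ → K} {p : ℕ → K[X]}

theorem IsPolySeq.transpose (hp : L.IsPolySeq a x p) : L.transpose.IsPolySeq a x p := by
  have hG : ∀ n, natIdx L.transpose.Es n = (natIdx L.Es n)ᵀ :=
    natIdx_comp L.Es Matrix.transpose Matrix.transpose_zero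
  refine ⟨hp.p_zero, hp.X_mul, hp.x_zero, fun n => ?_, fun n hn => ?_⟩
  · simpa only [hG, transpose_A, Matrix.transpose_mul, Matrix.transpose_smul, Matrix.mul_assoc]
      using congrArg Matrix.transpose (hp.Es_A_Es n)
  · simpa only [hG, transpose_A, Matrix.transpose_mul, Matrix.transpose_smul, Matrix.mul_assoc]
      using congrArg Matrix.transpose (hp.Es_A_Es_A_Es n hn)

theorem IsPolySeq.A_mul_sub_sub (hp : L.IsPolySeq a x p) {n : ℕ} (hn : n ≤ d)
    {R₀ R₁ : Matrix (Fin (d+1)) (Fin (d+1)) K} (h₀ : natIdx L.Es (n-1) * R₀ = R₀)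
    (h₁ : natIdx L.Es n * R₁ = R₁) (hlow : 0 < n → R₁ = natIdx L.Es n * L.A * R₀) :
    L.A * R₁ - a n • R₁ - x n • R₀ = natIdx L.Es (n+1) * L.A * R₁ := by
  have hG : ∀ {k m R}, natIdx L.Es m * R = R → k ≠ m → natIdx L.Es k * R = 0 := by
    intro k m R hR hkm
    rw [← hR, ← Matrix.mul_assoc, L.natIdx_Es_mul_of_ne hkm, Matrix.zero_mul]
  have hA : ∀ k, natIdx L.Es k * L.A * R₁ = natIdx L.Es k * L.A * natIdx L.Es n * R₁ := by
    intro k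
    rw [Matrix.mul_assoc _ (natIdx L.Es n), h₁]
  have hout : ∀ k, k ≠ n + 1 → natIdx L.Es k * (L.A * R₁ - a n • R₁ - x n • R₀) = 0 := by
    intro k hk
    rw [Matrix.mul_sub, Matrix.mul_sub, mul_smul_comm, mul_smul_comm, ← Matrix.mul_assoc]
    rcases (show k = n ∨ k + 1 = n ∨ (k + 1 < n ∨ n + 1 < k) by omega) with rfl | rfl | hkn
    · rw [hA, hp.Es_A_Es, smul_mul_assoc, h₁]
      rcases Nat.eq_zero_or_pos k with rfl | hk0
      · simp [hp.x_zero]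
      · simp [hG h₀ (show k ≠ k - 1 by omega)]
    · rw [hlow k.succ_pos, ← h₀]
      simp only [← Matrix.mul_assoc, Nat.add_sub_cancel, hp.Es_A_Es_A_Es k (by omega),
        smul_mul_assoc, L.natIdx_Es_mul_self, L.natIdx_Es_mul_of_ne (show k ≠ k + 1 by omega)]
      simp
    · rw [hA, L.natIdx_Es_mul_A_mul_of_far hkn, hG h₁ (by omega), hG h₀ (by omega)]
      simp
  calc L.A * R₁ - a n • R₁ - x n • R₀
      = natIdx L.Es (n+1) * (L.A * R₁ - a n • R₁ - x n • R₀) := by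
        simpa using L.mul_eq_mul_natIdx_Es_mul_of_forall_ne (B := 1) (by simpa using hout)
    _ = natIdx L.Es (n+1) * L.A * R₁ := by
      rw [Matrix.mul_sub, Matrix.mul_sub, mul_smul_comm, mul_smul_comm, hG h₁ (by omega),
        hG h₀ (by omega), Matrix.mul_assoc]
      simp

theorem IsPolySeq.aeval_succ_mul_Es_zero (hp : L.IsPolySeq a x p) {n : ℕ} (hn : n ≤ d) :
    aeval L.A (p (n+1)) * L.Es 0 = natIdx L.Es (n+1) * L.A * (aeval L.A (p n) * L.Es 0) := by
  induction n using Nat.strong_induction_on with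
  | _ n IH =>
  set R : ℕ → Matrix (Fin (d+1)) (Fin (d+1)) K := fun m => aeval L.A (p m) * L.Es 0
  have ih : ∀ m < n, R (m+1) = natIdx L.Es (m+1) * L.A * R m := fun m hm => IH m hm (by omega)
  have hGR : ∀ m ≤ n, natIdx L.Es m * R m = R m := by
    rintro (_ | m) hm
    · simp [R, hp.p_zero, natIdx_of_lt L.Es (Nat.succ_pos d), L.Es_mul]
    · rw [ih m (by omega), ← Matrix.mul_assoc, ← Matrix.mul_assoc (natIdx L.Es (m+1)),
        L.natIdx_Es_mul_self]
  have hrec : R (n+1) = L.A * R n - a n • R n - x n • R (n-1) := by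
    have : p (n+1) = X * p n - C (a n) * p n - C (x n) * p (n-1) := by
      rw [hp.X_mul n hn]; ring
    simp only [R, this, map_sub, map_mul, aeval_X, aeval_C, Algebra.algebraMap_eq_smul_one,
      Matrix.sub_mul, smul_mul_assoc, one_mul, Matrix.mul_assoc]
  change R (n+1) = natIdx L.Es (n+1) * L.A * R n
  rw [hrec]
  refine hp.A_mul_sub_sub hn (hGR _ (by omega)) (hGR n le_rfl) fun hn0 => ?_
  simpa [Nat.sub_add_cancel hn0] using ih (n-1) (by omega)

theorem IsPolySeq.natIdx_Es_mul_aeval_mul_Es_zero (hp : L.IsPolySeq a x p) {n : ℕ}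
    (hn : n ≤ d) :
    natIdx L.Es n * (aeval L.A (p n) * L.Es 0) = aeval L.A (p n) * L.Es 0 := by
  rcases n with _ | n
  · simp [hp.p_zero, natIdx_of_lt L.Es (Nat.succ_pos d), L.Es_mul]
  · rw [hp.aeval_succ_mul_Es_zero (by omega), ← Matrix.mul_assoc,
      ← Matrix.mul_assoc (natIdx L.Es _), L.natIdx_Es_mul_self]

theorem IsPolySeq.aeval_mul_Es_zero_ne_zero (hp : L.IsPolySeq a x p) {n : ℕ} (hn : n ≤ d) :
    aeval L.A (p n) * L.Es 0 ≠ 0 := by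
  induction n with
  | zero => simpa [hp.p_zero] using L.Es_ne 0
  | succ n ih =>
    rw [hp.aeval_succ_mul_Es_zero (by omega), ← hp.natIdx_Es_mul_aeval_mul_Es_zero (by omega),
      ← Matrix.mul_assoc]
    exact L.mul_natIdx_Es_mul_ne_zero (L.natIdx_Es_succ_mul_A_mul_ne_zero hn)
      (by rw [hp.natIdx_Es_mul_aeval_mul_Es_zero (by omega)]; exact ih (by omega))

theorem IsPolySeq.Es_zero_mul_aeval_mul_Es (hp : L.IsPolySeq a x p) (i : Fin (d+1)) :
    L.Es 0 * aeval L.A (p i) * L.Es i = L.Es 0 * aeval L.A (p i) := by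
  have h := congrArg Matrix.transpose (hp.transpose.natIdx_Es_mul_aeval_mul_Es_zero i.is_le)
  simpa [natIdx_comp, Matrix.transpose_mul, ← Matrix.transpose_aeval, Matrix.mul_assoc] using h

theorem IsPolySeq.eval_θ_zero_ne_zero (hp : L.IsPolySeq a x p) (i : Fin (d+1)) :
    (p i).eval (L.θ 0) ≠ 0 := by
  intro h
  have hzero : L.E 0 * (aeval L.A (p i) * L.Es 0) = 0 := by
    rw [← Matrix.mul_assoc, E_mul_aeval, h, zero_smul, Matrix.zero_mul]
  have hconc := hp.natIdx_Es_mul_aeval_mul_Es_zero i.is_le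
  rw [natIdx_val_s17] at hconc
  refine L.mul_natIdx_Es_mul_ne_zero (k := i) ?_ ?_
    (by rwa [natIdx_val_s17, Matrix.mul_assoc, hconc])
  · simpa using L.E_zero_mul_Es_ne_zero i
  · simpa [hconc] using hp.aeval_mul_Es_zero_ne_zero i.is_le

theorem IsPolySeq.eval_mul_eval {as xs : ℕ → K} {q : ℕ → K[X]} (hp : L.IsPolySeq a x p)
    (hq : L.dual.IsPolySeq as xs q) (i j : Fin (d+1)) :
    (p i).eval (L.θ j) * (q j).eval (L.θs 0) = (q j).eval (L.θs i) * (p i).eval (L.θ 0) := by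
  set P := aeval L.A (p i)
  set Q := aeval L.As (q j)
  have hP : L.Es i * (P * L.Es 0) = P * L.Es 0 := by
    simpa using hp.natIdx_Es_mul_aeval_mul_Es_zero i.is_le
  have hQ : L.E 0 * Q * L.E j = L.E 0 * Q := hq.Es_zero_mul_aeval_mul_Es j
  have hQEs : ∀ k, Q * L.Es k = (q j).eval (L.θs k) • L.Es k := L.dual.aeval_mul_E (q j)
  have h₁ : L.E 0 * Q * (P * L.Es 0) =
      ((q j).eval (L.θs i) * (p i).eval (L.θ 0)) • (L.E 0 * L.Es 0) := by
    rw [← hP, Matrix.mul_assoc, ← Matrix.mul_assoc Q, hQEs, smul_mul_assoc, hP, mul_smul_comm,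
      ← Matrix.mul_assoc, E_mul_aeval, smul_mul_assoc, smul_smul]
  have h₂ : L.E 0 * Q * (P * L.Es 0) =
      ((p i).eval (L.θ j) * (q j).eval (L.θs 0)) • (L.E 0 * L.Es 0) := by
    rw [← hQ, Matrix.mul_assoc, ← Matrix.mul_assoc (L.E j), E_mul_aeval, smul_mul_assoc,
      mul_smul_comm, ← Matrix.mul_assoc, hQ, Matrix.mul_assoc, hQEs, mul_smul_comm, smul_smul]
  exact smul_left_injective K (L.E_mul_Es_zero_ne_zero 0) (h₂.symm.trans h₁)

end LeonardSystem

theorem stmt17 {K : Type*} [Field K] {d : ℕ} (L : LeonardSystem K d)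
    (a x : ℕ → K)
    (ha : ∀ i : Fin (d+1), a (i:ℕ) = Matrix.trace (L.Es i * L.A))
    (hx0 : x 0 = 0)
    (hx : ∀ i : Fin (d+1), 1 ≤ (i:ℕ) →
      x (i:ℕ) = Matrix.trace (L.Es i * L.A * natIdx L.Es ((i:ℕ) - 1) * L.A))
    (p : ℕ → Polynomial K) (hp0 : p 0 = 1)
    (hrec : ∀ i : ℕ, i ≤ d →
      Polynomial.X * p i = p (i+1) + Polynomial.C (a i) * p i + Polynomial.C (x i) * p (i-1))
    (as xs : ℕ → K)
    (has : ∀ i : Fin (d+1), as (i:ℕ) = Matrix.trace (L.E i * L.As))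
    (hxs0 : xs 0 = 0)
    (hxs : ∀ i : Fin (d+1), 1 ≤ (i:ℕ) →
      xs (i:ℕ) = Matrix.trace (L.E i * L.As * natIdx L.E ((i:ℕ) - 1) * L.As))
    (q : ℕ → Polynomial K) (hq0 : q 0 = 1)
    (hqrec : ∀ i : ℕ, i ≤ d →
      Polynomial.X * q i = q (i+1) + Polynomial.C (as i) * q i + Polynomial.C (xs i) * q (i-1))
    :
    ∀ i j : Fin (d+1),
      (p (i:ℕ)).eval (L.θ j) / (p (i:ℕ)).eval (L.θ 0) =
      (q (j:ℕ)).eval (L.θs i) / (q (j:ℕ)).eval (L.θs 0) := by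
  intro i j
  have hp := L.isPolySeq_of_trace a x ha hx0 hx p hp0 hrec
  have hq := L.dual.isPolySeq_of_trace as xs has hxs0 hxs q hq0 hqrec
  exact (div_eq_div_iff (hp.eval_θ_zero_ne_zero i) (hq.eval_θ_zero_ne_zero j)).mpr
    (hp.eval_mul_eval hq i j)
end
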